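/- The integral ∫_0^∞ z^{d/α - 1} (E_β(-z))^2 dz is finite if and only if d < 2α. -/
import Mathlib


open MeasureTheory Real Set

/-- The Mittag-Leffler function `E_β(x) = ∑_{k≥0} x^k / Γ(1+βk)`. -/
noncomputable def mittagLeffler (β x : ℝ) : ℝ := ∑' k : ℕ, x ^ k / Real.Gamma (1 + β * k)

open Filter
-- Gamma ratio lower bound via log-convexity
lemma gamma_ratio {β y : ℝ} (hβ0 : 0 < β) (hβ1 : β ≤ 1) (hy : 1 ≤ y) :
    Real.Gamma y * (y + β - 1) ^ β ≤ Real.Gamma (y + β) := by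
  have ha : (0:ℝ) < y + β - 1 := by linarith
  have hyb : (0:ℝ) < y + β := by linarith
  have hy0 : (0:ℝ) < y := by linarith
  have hc := Real.convexOn_log_Gamma.2 (mem_Ioi.2 ha) (mem_Ioi.2 hyb)
      hβ0.le (by linarith : (0:ℝ) ≤ 1 - β) (by ring)
  have hcomb : β • (y + β - 1) + (1 - β) • (y + β) = y := by
    simp [smul_eq_mul]; ring
  rw [hcomb] at hc
  -- Γ(y+β) = (y+β-1) Γ(y+β-1)
  have hrec : Real.Gamma (y + β) = (y + β - 1) * Real.Gamma (y + β - 1) := by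
    have := Real.Gamma_add_one (ne_of_gt ha)
    rw [show y + β - 1 + 1 = y + β by ring] at this
    exact this
  have hΓa : 0 < Real.Gamma (y + β - 1) := Real.Gamma_pos_of_pos ha
  have hΓyb : 0 < Real.Gamma (y + β) := Real.Gamma_pos_of_pos hyb
  have hΓy : 0 < Real.Gamma y := Real.Gamma_pos_of_pos hy0
  -- log Γ y ≤ β log Γ(y+β-1) + (1-β) log Γ(y+β)
  simp only [Function.comp_apply, smul_eq_mul] at hc
  have hloga : Real.log (Real.Gamma (y + β - 1)) =
      Real.log (Real.Gamma (y + β)) - Real.log (y + β - 1) := by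
    rw [hrec, Real.log_mul (ne_of_gt ha) (ne_of_gt hΓa)]; ring
  rw [hloga] at hc
  have hlog : Real.log (Real.Gamma y * (y + β - 1) ^ β)
      ≤ Real.log (Real.Gamma (y + β)) := by
    rw [Real.log_mul (ne_of_gt hΓy) (ne_of_gt (Real.rpow_pos_of_pos ha β)),
      Real.log_rpow ha]
    nlinarith [hc]
  calc Real.Gamma y * (y + β - 1) ^ β
      = Real.exp (Real.log (Real.Gamma y * (y + β - 1) ^ β)) := by
        rw [Real.exp_log (by positivity)]
    _ ≤ Real.exp (Real.log (Real.Gamma (y + β))) := Real.exp_le_exp.2 hlog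
    _ = Real.Gamma (y + β) := Real.exp_log hΓyb

lemma summable_ml {β : ℝ} (hβ0 : 0 < β) (hβ1 : β ≤ 1) (x : ℝ) :
    Summable (fun k : ℕ => x ^ k / Real.Gamma (1 + β * k)) := by
  apply summable_of_ratio_norm_eventually_le (r := 1/2) (by norm_num)
  have htend : Tendsto (fun k : ℕ => (β * k + β) ^ β) atTop atTop := by
    apply (tendsto_rpow_atTop hβ0).comp
    apply tendsto_atTop_add_const_right
    exact (tendsto_natCast_atTop_atTop).const_mul_atTop hβ0
  filter_upwards [htend.eventually_ge_atTop (2 * |x| + 1)] with k hk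
  set y := 1 + β * (k : ℝ) with hy
  have hy1 : 1 ≤ y := by
    have : (0:ℝ) ≤ (k:ℝ) := Nat.cast_nonneg k
    nlinarith
  have hyβ : 1 + β * ((k + 1 : ℕ) : ℝ) = y + β := by push_cast [hy]; ring
  have hΓy : 0 < Real.Gamma y := Real.Gamma_pos_of_pos (by linarith)
  have hΓyb : 0 < Real.Gamma (y + β) := Real.Gamma_pos_of_pos (by linarith)
  have hkey : (2 * |x| + 1) * Real.Gamma y ≤ Real.Gamma (y + β) := by
    have h1 := gamma_ratio hβ0 hβ1 hy1
    have h2 : y + β - 1 = β * k + β := by rw [hy]; ring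
    rw [h2] at h1
    nlinarith [hΓy]
  rw [hyβ]
  have hxk : (0:ℝ) ≤ |x| ^ k := by positivity
  calc ‖x ^ (k+1) / Real.Gamma (y + β)‖ = |x| * |x| ^ k / Real.Gamma (y + β) := by
        rw [Real.norm_eq_abs, abs_div, abs_of_pos hΓyb, abs_pow, pow_succ]; ring
    _ ≤ |x| * |x| ^ k / ((2 * |x| + 1) * Real.Gamma y) := by
        apply div_le_div_of_nonneg_left (by positivity) (by positivity) hkey
    _ = |x| / (2 * |x| + 1) * (|x| ^ k / Real.Gamma y) := by
        field_simp
    _ ≤ 1/2 * (|x| ^ k / Real.Gamma y) := by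
        have h5 : |x| / (2 * |x| + 1) ≤ 1/2 := by
          rw [div_le_iff₀ (by positivity)]; nlinarith [abs_nonneg x]
        exact mul_le_mul_of_nonneg_right h5 (by positivity)
    _ = 1/2 * ‖x ^ k / Real.Gamma y‖ := by
        rw [Real.norm_eq_abs, abs_div, abs_of_pos hΓy, abs_pow]


lemma measurable_ml {β : ℝ} (hβ0 : 0 < β) (hβ1 : β ≤ 1) :
    Measurable (mittagLeffler β) := by
  apply measurable_of_tendsto_metrizable
    (f := fun n x => ∑ k ∈ Finset.range n, x ^ k / Real.Gamma (1 + β * k))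
  · intro n
    exact Finset.measurable_sum _ fun k _ => (measurable_id.pow_const k).div_const _
  · rw [tendsto_pi_nhds]
    exact fun x => (summable_ml hβ0 hβ1 x).hasSum.tendsto_sum_nat

lemma rpow_helper {z : ℝ} (hz : 0 < z) (s : ℝ) :
    z ^ (s - 1) * (z⁻¹) ^ 2 = z ^ (s - 3) := by
  rw [show s - 3 = s - 1 + (-1) + (-1) by ring, Real.rpow_add hz, Real.rpow_add hz,
    Real.rpow_neg_one]
  ring

lemma aesm_rpow_const {s : Set ℝ} (hs : MeasurableSet s) (h : s ⊆ Ioi 0) (p : ℝ) :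
    AEStronglyMeasurable (fun z : ℝ => z ^ p) (MeasureTheory.volume.restrict s) := by
  apply ContinuousOn.aestronglyMeasurable _ hs
  intro z hz
  exact (Real.continuousAt_rpow_const z p (Or.inl (ne_of_gt (h hz)))).continuousWithinAt

theorem integrable_rpow_mittagLeffler_sq_iff (β α d : ℝ) (hβ0 : 0 < β) (hβ1 : β < 1)
    (hα : 0 < α) (hd : 0 < d)
    (hML : ∀ x : ℝ, 0 < x →
      1 / (1 + Real.Gamma (1 - β) * x) ≤ mittagLeffler β (-x) ∧
        mittagLeffler β (-x) ≤ 1 / (1 + x / Real.Gamma (1 + β))) :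
    IntegrableOn (fun z : ℝ => z ^ (d / α - 1) * (mittagLeffler β (-z)) ^ 2) (Ioi 0)
      ↔ d < 2 * α := by
  have hΓ1p : 0 < Real.Gamma (1 - β) := Real.Gamma_pos_of_pos (by linarith)
  have hΓ2p : 0 < Real.Gamma (1 + β) := Real.Gamma_pos_of_pos (by linarith)
  set Γ1 := Real.Gamma (1 - β)
  set Γ2 := Real.Gamma (1 + β)
  have hmeasE : Measurable (fun z : ℝ => (mittagLeffler β (-z)) ^ 2) :=
    ((measurable_ml hβ0 hβ1.le).comp measurable_neg).pow_const 2
  have hmeas : ∀ s : Set ℝ, MeasurableSet s → s ⊆ Ioi 0 →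
      AEStronglyMeasurable (fun z : ℝ => z ^ (d / α - 1) * (mittagLeffler β (-z)) ^ 2)
        (MeasureTheory.volume.restrict s) :=
    fun s hs h => (aesm_rpow_const hs h _).mul (hmeasE.aestronglyMeasurable.restrict)
  constructor
  · intro h
    set c : ℝ := ((1 + Γ1)⁻¹) ^ 2 with hc
    have hcpos : 0 < c := by positivity
    have h1 : IntegrableOn (fun z : ℝ => z ^ (d / α - 1) * (mittagLeffler β (-z)) ^ 2)
        (Ioi 1) := h.mono_set (Ioi_subset_Ioi zero_le_one)
    have h2 : IntegrableOn (fun z : ℝ => c * z ^ (d / α - 3)) (Ioi 1) := by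
      apply Integrable.mono h1
        ((aesm_rpow_const measurableSet_Ioi (Ioi_subset_Ioi zero_le_one) _).const_mul c)
      filter_upwards [ae_restrict_mem measurableSet_Ioi] with z hz
      have hz1 : 1 < z := hz
      have hz0 : 0 < z := by linarith
      have hE := (hML z hz0).1
      have hElow : (1 + Γ1)⁻¹ * z⁻¹ ≤ mittagLeffler β (-z) := by
        have hle : 1 + Γ1 * z ≤ (1 + Γ1) * z := by nlinarith
        calc (1 + Γ1)⁻¹ * z⁻¹ = 1 / ((1 + Γ1) * z) := by
              rw [one_div, mul_inv]
          _ ≤ 1 / (1 + Γ1 * z) := one_div_le_one_div_of_le (by positivity) hle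
          _ ≤ _ := hE
      have hEpos : 0 < mittagLeffler β (-z) :=
        lt_of_lt_of_le (by positivity) hElow
      rw [Real.norm_eq_abs, Real.norm_eq_abs, abs_of_nonneg (by positivity),
        abs_of_nonneg (by positivity)]
      calc c * z ^ (d / α - 3) = ((1 + Γ1)⁻¹ * z⁻¹) ^ 2 * z ^ (d / α - 1) := by
            rw [← rpow_helper hz0 (d / α), hc]; ring
        _ ≤ (mittagLeffler β (-z)) ^ 2 * z ^ (d / α - 1) :=
            mul_le_mul_of_nonneg_right (pow_le_pow_left₀ (by positivity) hElow 2)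
              (Real.rpow_nonneg hz0.le _)
        _ = z ^ (d / α - 1) * (mittagLeffler β (-z)) ^ 2 := mul_comm _ _
    have h3 : IntegrableOn (fun z : ℝ => z ^ (d / α - 3)) (Ioi 1) := by
      have h4 := h2.const_mul c⁻¹
      refine h4.congr (ae_of_all _ fun z => ?_)
      field_simp
    rw [integrableOn_Ioi_rpow_iff zero_lt_one] at h3
    have hlt : d / α < 2 := by linarith
    calc d = d / α * α := by field_simp
      _ < 2 * α := mul_lt_mul_of_pos_right hlt hα
  · intro hd2
    have hdiv : 0 < d / α := div_pos hd hα
    have hs3 : d / α - 3 < -1 := by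
      have : d / α < 2 := (div_lt_iff₀ hα).2 (by linarith)
      linarith
    rw [show Ioi (0:ℝ) = Ioc 0 1 ∪ Ioi 1 from (Ioc_union_Ioi_eq_Ioi zero_le_one).symm]
    apply IntegrableOn.union
    · have hg : IntegrableOn (fun z : ℝ => z ^ (d / α - 1)) (Ioc (0:ℝ) 1) := by
        rw [integrableOn_Ioc_iff_integrableOn_Ioo]
        exact (intervalIntegral.integrableOn_Ioo_rpow_iff zero_lt_one).2 (by linarith)
      apply Integrable.mono' hg (hmeas _ measurableSet_Ioc (fun z hz => hz.1))
      filter_upwards [ae_restrict_mem measurableSet_Ioc] with z hz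
      have hz0 : 0 < z := hz.1
      have hEpos : 0 < mittagLeffler β (-z) :=
        lt_of_lt_of_le (by positivity) (hML z hz0).1
      have hE1 : mittagLeffler β (-z) ≤ 1 := by
        refine (hML z hz0).2.trans ?_
        rw [div_le_one (by positivity)]
        have : 0 ≤ z / Γ2 := by positivity
        linarith
      rw [Real.norm_eq_abs, abs_of_nonneg (by positivity)]
      exact mul_le_of_le_one_right (Real.rpow_nonneg hz0.le _)
        (pow_le_one₀ hEpos.le hE1)
    · have hg : IntegrableOn (fun z : ℝ => Γ2 ^ 2 * z ^ (d / α - 3)) (Ioi (1:ℝ)) :=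
        ((integrableOn_Ioi_rpow_iff zero_lt_one).2 hs3).const_mul _
      apply Integrable.mono' hg (hmeas _ measurableSet_Ioi (Ioi_subset_Ioi zero_le_one))
      filter_upwards [ae_restrict_mem measurableSet_Ioi] with z hz
      have hz1 : 1 < z := hz
      have hz0 : 0 < z := by linarith
      have hEpos : 0 < mittagLeffler β (-z) :=
        lt_of_lt_of_le (by positivity) (hML z hz0).1
      have hEup : mittagLeffler β (-z) ≤ Γ2 * z⁻¹ := by
        calc mittagLeffler β (-z) ≤ 1 / (1 + z / Γ2) := (hML z hz0).2
          _ ≤ 1 / (z / Γ2) := one_div_le_one_div_of_le (by positivity) (by linarith)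
          _ = Γ2 * z⁻¹ := by rw [one_div_div, div_eq_mul_inv]
      rw [Real.norm_eq_abs, abs_of_nonneg (by positivity)]
      calc z ^ (d / α - 1) * (mittagLeffler β (-z)) ^ 2
          ≤ z ^ (d / α - 1) * (Γ2 * z⁻¹) ^ 2 :=
            mul_le_mul_of_nonneg_left (pow_le_pow_left₀ hEpos.le hEup 2)
              (Real.rpow_nonneg hz0.le _)
        _ = Γ2 ^ 2 * z ^ (d / α - 3) := by rw [← rpow_helper hz0 (d / α)]; ring
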